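/- A family (f_t)_{t≥0} in L¹(ℝ^{dN}) solves the Kac master equation ∂_t f_t = λN(Q − I)f_t + μN(R − I)f_t if and only if the ground-state transformed family h_t(v) := f_t(v)/g_β^{(N)}(v) solves the transformed master equation ∂_t h_t = λN(Q − I)h_t + μN(T − I)h_t, where T = (1/N) Σ_{j=1}^N T_j and T_j[h](v) = ∫_{ℝ^d} g_β^{(1)}(w) dw ∫_{S^{d−1}} dρ(σ) h(P M_σ^{(j,N+1)}(v,w)). -/

import Mathlib

open MeasureTheory Real

noncomputable section

/-- `ℝ^{dn}`: the Euclidean space of `n` particle velocities in dimension `d`. -/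
abbrev PSpace (d n : ℕ) : Type := EuclideanSpace ℝ (Fin n × Fin d)

/-- `ℝ^d`. -/
abbrev Vec (d : ℕ) : Type := EuclideanSpace ℝ (Fin d)

/-- The Maxwellian (Gaussian) density with inverse temperature `β`. -/
def maxwellian (β : ℝ) {ι : Type} [Fintype ι] (v : EuclideanSpace ℝ ι) : ℝ :=
  (β / (2 * π)) ^ ((Fintype.card ι : ℝ) / 2) * exp (-β / 2 * ‖v‖ ^ 2)

/-- The reflection collision `M_σ^{(i,j)}` of particles `i` and `j` with direction `σ`:
particle `i` becomes `v_i - ⟪σ, v_i - v_j⟫ σ`, particle `j` becomes `v_j + ⟪σ, v_i - v_j⟫ σ`. -/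
def collide {d n : ℕ} (σ : Vec d) (i j : Fin n) (v : PSpace d n) : PSpace d n :=
  WithLp.toLp 2 fun p =>
    if p.1 = i then v p - (∑ a, σ a * (v (i, a) - v (j, a))) * σ p.2
    else if p.1 = j then v p + (∑ a, σ a * (v (i, a) - v (j, a))) * σ p.2
    else v p

/-- The post-collisional velocity of the thermostat particle colliding with particle `j`. -/
def thermOut {d n : ℕ} (σ : Vec d) (j : Fin n) (w : Vec d) (v : PSpace d n) : Vec d :=
  WithLp.toLp 2 fun a => w a + (∑ b, σ b * (v (j, b) - w b)) * σ a

/-- The collision of particle `j` with a thermostat particle of velocity `w`: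
the first `n` components of `M_σ^{(j,n+1)}(v,w)`. -/
def thermCollide {d n : ℕ} (σ : Vec d) (j : Fin n) (w : Vec d) (v : PSpace d n) : PSpace d n :=
  WithLp.toLp 2 fun p => if p.1 = j then v p - (∑ b, σ b * (v (j, b) - w b)) * σ p.2 else v p

/-- The Kac collision operator `Q` (the identity if `n = 1`). -/
def Qop {d n : ℕ} (ρ : Measure (Vec d)) (h : PSpace d n → ℝ) : PSpace d n → ℝ :=
  if n = 1 then h
  else fun v => (n.choose 2 : ℝ)⁻¹ *
    ∑ i : Fin n, ∑ j : Fin n, if i < j then ∫ σ, h (collide σ i j v) ∂ρ else 0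

/-- The thermostat interaction operator `R_j`. -/
def Rop_j {d n : ℕ} (ρ : Measure (Vec d)) (β : ℝ) (j : Fin n) (f : PSpace d n → ℝ) :
    PSpace d n → ℝ :=
  fun v => ∫ w : Vec d, ∫ σ, maxwellian β (thermOut σ j w v) * f (thermCollide σ j w v) ∂ρ

/-- The thermostat operator `R = N⁻¹ ∑_j R_j`. -/
def Rop {d n : ℕ} (ρ : Measure (Vec d)) (β : ℝ) (f : PSpace d n → ℝ) : PSpace d n → ℝ :=
  fun v => (n : ℝ)⁻¹ * ∑ j : Fin n, Rop_j ρ β j f v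

/-- The transformed thermostat operator `T_j`. -/
def Tj {d n : ℕ} (ρ : Measure (Vec d)) (β : ℝ) (j : Fin n) (h : PSpace d n → ℝ) :
    PSpace d n → ℝ :=
  fun v => ∫ w : Vec d, maxwellian β w * ∫ σ, h (thermCollide σ j w v) ∂ρ

/-- The transformed thermostat operator `T = N⁻¹ ∑_j T_j`. -/
def Tav {d n : ℕ} (ρ : Measure (Vec d)) (β : ℝ) (h : PSpace d n → ℝ) : PSpace d n → ℝ :=
  fun v => (n : ℝ)⁻¹ * ∑ j : Fin n, Tj ρ β j h v

/-- The generator `L = λN(Q - I) + μN(R - I)` of the Kac system coupled to a thermostat. -/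
def thermGen {d n : ℕ} (ρ : Measure (Vec d)) (β lam mu : ℝ) (f : PSpace d n → ℝ) :
    PSpace d n → ℝ :=
  fun v => lam * n * (Qop ρ f v - f v) + mu * n * (Rop ρ β f v - f v)

/-- The transformed generator `L' = λN(Q - I) + μN(T - I)`. -/
def thermGen' {d n : ℕ} (ρ : Measure (Vec d)) (β lam mu : ℝ) (h : PSpace d n → ℝ) :
    PSpace d n → ℝ :=
  fun v => lam * n * (Qop ρ h v - h v) + mu * n * (Tav ρ β h v - h v)

/-- The exponential semigroup `e^{tL}` of a generator `L = Λ(B - I)`, `B := I + L/Λ`,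
written as the series `e^{-Λt} ∑_k (Λt)^k/k! Bᵏ`. -/
def evolOf {V : Type} (Λ : ℝ) (L : (V → ℝ) → V → ℝ) (t : ℝ) (f : V → ℝ) : V → ℝ :=
  fun v => exp (-(Λ * t)) *
    ∑' k : ℕ, (Λ * t) ^ k / (k.factorial : ℝ) * ((fun g u => g u + L g u / Λ)^[k] f) v

/-- Fisher information with respect to the Gaussian measure `g_β(v)dv`. -/
def fisherInfo {d n : ℕ} (β : ℝ) (h : PSpace d n → ℝ) : ℝ :=
  ∫ v, ‖gradient h v‖ ^ 2 / h v * maxwellian β v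

/-- Relative entropy `S(f|γ) = ∫ f ln(f/γ)`. -/
def relEnt {d n : ℕ} (f γ : PSpace d n → ℝ) : ℝ :=
  ∫ v, f v * log (f v / γ v)

/-- `√h ∈ H¹` with respect to the weight `w`. -/
def sqrtMemH1 {d n : ℕ} (w : PSpace d n → ℝ) (h : PSpace d n → ℝ) : Prop :=
  Differentiable ℝ (fun v => Real.sqrt (h v)) ∧
  Integrable (fun v => Real.sqrt (h v) ^ 2 * w v) ∧
  Integrable (fun v => ‖gradient (fun u => Real.sqrt (h u)) v‖ ^ 2 * w v)

/-- The Ornstein–Uhlenbeck semigroup with respect to the Gaussian `g_β`. -/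
def OU {ι : Type} [Fintype ι] (β s : ℝ) (h : EuclideanSpace ℝ ι → ℝ) :
    EuclideanSpace ℝ ι → ℝ :=
  fun v => ∫ x : EuclideanSpace ℝ ι,
    h (exp (-s) • v + Real.sqrt (1 - exp (-2 * s)) • x) * maxwellian β x

/-- The system block of `u = (v,w) ∈ ℝ^{dN} × ℝ^{dM}`. -/
def blkS {d N M : ℕ} (u : PSpace d (N + M)) : PSpace d N :=
  WithLp.toLp 2 fun p => u (Fin.castAdd M p.1, p.2)

/-- The reservoir block of `u = (v,w) ∈ ℝ^{dN} × ℝ^{dM}`. -/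
def blkR {d N M : ℕ} (u : PSpace d (N + M)) : PSpace d M :=
  WithLp.toLp 2 fun p => u (Fin.natAdd N p.1, p.2)

/-- Gluing `(v, w) ∈ ℝ^{dN} × ℝ^{dM}` into an element of `ℝ^{d(N+M)}`. -/
def glue {d N M : ℕ} (v : PSpace d N) (w : PSpace d M) : PSpace d (N + M) :=
  WithLp.toLp 2 fun p =>
    if h : (p.1 : ℕ) < N then v (⟨p.1, h⟩, p.2)
    else w (⟨(p.1 : ℕ) - N, by have := p.1.isLt; omega⟩, p.2)

/-- The pair collision operator `R_{ij}`. -/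
def Rij {d n : ℕ} (ρ : Measure (Vec d)) (i j : Fin n) (F : PSpace d n → ℝ) : PSpace d n → ℝ :=
  fun u => ∫ σ, F (collide σ i j u) ∂ρ

/-- The generator of the Kac system coupled to a heat reservoir. -/
def hrGen {d N M : ℕ} (ρ : Measure (Vec d)) (lamS lamR mu : ℝ)
    (F : PSpace d (N + M) → ℝ) : PSpace d (N + M) → ℝ :=
  fun u =>
    lamS / ((N : ℝ) - 1) *
        ∑ i : Fin (N + M), ∑ j : Fin (N + M), (if (i : ℕ) < (j : ℕ) ∧ (j : ℕ) < N then Rij ρ i j F u - F u else 0) +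
    lamR / ((M : ℝ) - 1) *
        ∑ i : Fin (N + M), ∑ j : Fin (N + M), (if N ≤ (i : ℕ) ∧ (i : ℕ) < (j : ℕ) then Rij ρ i j F u - F u else 0) +
    mu / (M : ℝ) *
        ∑ i : Fin (N + M), ∑ j : Fin (N + M), (if (i : ℕ) < N ∧ N ≤ (j : ℕ) then Rij ρ i j F u - F u else 0)

/-- `Λ = λ_S N/2 + λ_R M/2 + μN`. -/
def hrLam (N M : ℕ) (lamS lamR mu : ℝ) : ℝ :=
  lamS * N / 2 + lamR * M / 2 + mu * N

/-- The heat-reservoir evolution `e^{tL}`. -/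
def hrEvol {d N M : ℕ} (ρ : Measure (Vec d)) (lamS lamR mu : ℝ) (t : ℝ)
    (F₀ : PSpace d (N + M) → ℝ) : PSpace d (N + M) → ℝ :=
  evolOf (hrLam N M lamS lamR mu) (hrGen ρ lamS lamR mu) t F₀

/-- The generator of the classic Kac model on `n` particles. -/
def clGen {d n : ℕ} (ρ : Measure (Vec d)) (F : PSpace d n → ℝ) : PSpace d n → ℝ :=
  fun u => 2 / ((n : ℝ) - 1) *
    ∑ i : Fin n, ∑ j : Fin n, (if (i : ℕ) < (j : ℕ) then Rij ρ i j F u - F u else 0)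

/-- Lebesgue marginal over the reservoir variables. -/
def margLeb {d N M : ℕ} (F : PSpace d (N + M) → ℝ) : PSpace d N → ℝ :=
  fun v => ∫ w : PSpace d M, F (glue v w)

/-- Gaussian marginal `Π` over the reservoir variables. -/
def margGauss {d N M : ℕ} (β : ℝ) (φ : PSpace d (N + M) → ℝ) : PSpace d N → ℝ :=
  fun v => ∫ w : PSpace d M, φ (glue v w) * maxwellian β w

/-- The reflection collision matrix `M_σ^{(i,j)}` as a `dn × dn` matrix. -/
def colMat {d n : ℕ} (σ : Vec d) (i j : Fin n) :
    Matrix (Fin n × Fin d) (Fin n × Fin d) ℝ :=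
  fun p q =>
    (if p = q then (1 : ℝ) else 0) +
    (if (p.1 = i ∧ q.1 = j) ∨ (p.1 = j ∧ q.1 = i) then σ p.2 * σ q.2 else 0) -
    (if (p.1 = i ∧ q.1 = i) ∨ (p.1 = j ∧ q.1 = j) then σ p.2 * σ q.2 else 0)

/-- The product `M_{σ_k}^{(α_k)} ⋯ M_{σ_1}^{(α_1)}` of a collision history. -/
def histMat {d n : ℕ} (k : ℕ) (α : Fin k → Fin n × Fin n) (σs : Fin k → Vec d) :
    Matrix (Fin n × Fin d) (Fin n × Fin d) ℝ :=
  ((List.ofFn fun m : Fin k => colMat (σs m) (α m).1 (α m).2).reverse).prod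

/-- The top-left `dN × dN` block of a `d(N+M) × d(N+M)` matrix. -/
def topLeftBlk {d N M : ℕ} (A : Matrix (Fin (N + M) × Fin d) (Fin (N + M) × Fin d) ℝ) :
    Matrix (Fin N × Fin d) (Fin N × Fin d) ℝ :=
  fun p q => A (Fin.castAdd M p.1, p.2) (Fin.castAdd M q.1, q.2)

/-- The collision-history weights `λ_{(i,j)}`. -/
def hrWeight (N M : ℕ) (lamS lamR mu : ℝ) (ij : Fin (N + M) × Fin (N + M)) : ℝ :=
  if (ij.1 : ℕ) < (ij.2 : ℕ) then
    if (ij.2 : ℕ) < N then lamS / (hrLam N M lamS lamR mu * ((N : ℝ) - 1))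
    else if N ≤ (ij.1 : ℕ) then lamR / (hrLam N M lamS lamR mu * ((M : ℝ) - 1))
    else mu / (hrLam N M lamS lamR mu * (M : ℝ))
  else 0

/-! The Maxwellian depends on `v` only through the kinetic energy `‖v‖²`, which every collision
conserves: a pair collision conserves the energy of the system, a thermostat collision that of the
system together with the thermostat particle. Hence `g_β ∘ M = g_β` inside `Q`, and
`g_β(w') g_β(v') = g_β(v) g_β(w)` inside `R_j`, which turns `R_j[f] / g_β` into `T_j[f / g_β]`.
Division by `g_β`, which does not depend on time, therefore intertwines the two generators and
the two evolution equations. -/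

lemma Finset.sum_add_mul_sq {ι : Type} [Fintype ι] (x e : ι → ℝ) (t : ℝ) :
    ∑ i, (x i + t * e i) ^ 2 = ∑ i, x i ^ 2 + t * (2 * ∑ i, x i * e i + t * ∑ i, e i ^ 2) := by
  simp only [Finset.mul_sum, ← Finset.sum_add_distrib]
  exact Finset.sum_congr rfl fun i _ => by ring

lemma Fintype.sum_prod_mul_ite_fst {ι κ : Type} [Fintype ι] [Fintype κ] [DecidableEq ι]
    (f : ι × κ → ℝ) (j : ι) (g : κ → ℝ) :
    ∑ p, f p * (if p.1 = j then g p.2 else 0) = ∑ a, f (j, a) * g a := by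
  simp [Fintype.sum_prod_type, mul_ite]

section Energy

variable {d n : ℕ}

lemma collide_apply_eq_add_mul {σ : Vec d} {i j : Fin n} (hij : i ≠ j) (v : PSpace d n)
    (p : Fin n × Fin d) :
    collide σ i j v p = v p + (∑ a, σ a * (v (i, a) - v (j, a))) *
      ((if p.1 = j then σ p.2 else 0) - (if p.1 = i then σ p.2 else 0)) := by
  simp only [collide, WithLp.ofLp_toLp]
  by_cases hi : p.1 = i
  · simp only [hi, ↓reduceIte, hij, zero_sub, mul_neg]
    ring
  · by_cases hj : p.1 = j <;> simp [hi, hj, hij.symm]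

lemma norm_collide {σ : Vec d} (hσ : ‖σ‖ = 1) {i j : Fin n} (hij : i ≠ j) (v : PSpace d n) :
    ‖collide σ i j v‖ = ‖v‖ := by
  have hσ2 : ∑ a, σ a ^ 2 = 1 := by rw [← EuclideanSpace.real_norm_sq_eq, hσ, one_pow]
  set c := ∑ a, σ a * (v (i, a) - v (j, a)) with hc
  set e : Fin n × Fin d → ℝ := fun p =>
    (if p.1 = j then σ p.2 else 0) - (if p.1 = i then σ p.2 else 0) with he
  have hve : ∑ p, v p * e p = -c := by
    simp only [he, mul_sub, Finset.sum_sub_distrib, Fintype.sum_prod_mul_ite_fst, hc]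
    simp only [mul_comm (v _)]
    ring
  have hee : ∑ p, e p ^ 2 = 2 := by
    calc ∑ p, e p ^ 2
        = ∑ p, e p * (if p.1 = j then σ p.2 else 0) - ∑ p, e p * (if p.1 = i then σ p.2 else 0) := by
          rw [← Finset.sum_sub_distrib]
          exact Finset.sum_congr rfl fun p _ => by rw [sq, ← mul_sub]
      _ = 2 := by
          simp only [Fintype.sum_prod_mul_ite_fst, he, if_pos, if_neg hij, if_neg hij.symm]
          simp only [sub_zero, zero_sub, neg_mul, Finset.sum_neg_distrib, ← sq, hσ2]
          norm_num
  refine (sq_eq_sq₀ (norm_nonneg _) (norm_nonneg _)).1 ?_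
  rw [EuclideanSpace.real_norm_sq_eq, EuclideanSpace.real_norm_sq_eq,
    Finset.sum_congr rfl fun p _ => by rw [collide_apply_eq_add_mul hij], Finset.sum_add_mul_sq,
    hve, hee]
  ring

lemma thermCollide_apply_eq_add_mul (σ : Vec d) (j : Fin n) (w : Vec d) (v : PSpace d n)
    (p : Fin n × Fin d) :
    thermCollide σ j w v p =
      v p + -(∑ b, σ b * (v (j, b) - w b)) * (if p.1 = j then σ p.2 else 0) := by
  by_cases hj : p.1 = j <;> simp only [thermCollide, WithLp.ofLp_toLp, hj, ↓reduceIte] <;> ring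

lemma norm_thermCollide_sq_add_norm_thermOut_sq {σ : Vec d} (hσ : ‖σ‖ = 1) (j : Fin n)
    (w : Vec d) (v : PSpace d n) :
    ‖thermCollide σ j w v‖ ^ 2 + ‖thermOut σ j w v‖ ^ 2 = ‖v‖ ^ 2 + ‖w‖ ^ 2 := by
  have hσ2 : ∑ a, σ a ^ 2 = 1 := by rw [← EuclideanSpace.real_norm_sq_eq, hσ, one_pow]
  have hc : ∑ b, σ b * (v (j, b) - w b) = ∑ a, v (j, a) * σ a - ∑ a, w a * σ a := by
    rw [← Finset.sum_sub_distrib]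
    exact Finset.sum_congr rfl fun a _ => by ring
  have hout : ∀ a, thermOut σ j w v a = w a + (∑ b, σ b * (v (j, b) - w b)) * σ a :=
    fun a => rfl
  have hee : ∑ p : Fin n × Fin d, (if p.1 = j then σ p.2 else 0) ^ 2 = 1 := by
    simpa only [sq, Fintype.sum_prod_mul_ite_fst, if_true] using hσ2
  simp only [EuclideanSpace.real_norm_sq_eq, thermCollide_apply_eq_add_mul, Finset.sum_add_mul_sq,
    Fintype.sum_prod_mul_ite_fst, hee, hout, hσ2, hc]
  ring

end Energy

lemma hasDerivAt_div_const_iff {𝕜 𝕜' : Type} [NontriviallyNormedField 𝕜]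
    [NormedDivisionRing 𝕜'] [NormedAlgebra 𝕜 𝕜'] {c : 𝕜 → 𝕜'} {c' d : 𝕜'} {x : 𝕜} (hd : d ≠ 0) :
    HasDerivAt (fun y => c y / d) (c' / d) x ↔ HasDerivAt c c' x := by
  refine ⟨fun h => ?_, fun h => h.div_const d⟩
  simpa only [div_mul_cancel₀ _ hd] using h.mul_const d

section Maxwellian

variable {ι κ : Type} [Fintype ι] [Fintype κ] {β : ℝ}

lemma maxwellian_pos (hβ : 0 < β) (v : EuclideanSpace ℝ ι) : 0 < maxwellian β v := by
  have : 0 < β / (2 * π) := by positivity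
  unfold maxwellian
  positivity

lemma maxwellian_eq_of_norm_eq {x y : EuclideanSpace ℝ ι} (h : ‖x‖ = ‖y‖) :
    maxwellian β x = maxwellian β y := by
  rw [maxwellian, maxwellian, h]

lemma maxwellian_mul_eq_of_norm_sq_add_eq {x x' : EuclideanSpace ℝ ι} {y y' : EuclideanSpace ℝ κ}
    (h : ‖x‖ ^ 2 + ‖y‖ ^ 2 = ‖x'‖ ^ 2 + ‖y'‖ ^ 2) :
    maxwellian β x * maxwellian β y = maxwellian β x' * maxwellian β y' := by
  simp only [maxwellian]
  rw [mul_mul_mul_comm, mul_mul_mul_comm _ (exp _), ← exp_add, ← exp_add, ← mul_add, ← mul_add, h]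

end Maxwellian

section Operators

variable {d n : ℕ} {ρ : Measure (Vec d)} {β : ℝ}

lemma Qop_div_maxwellian (hρ : ∀ᵐ σ ∂ρ, ‖σ‖ = 1) (f : PSpace d n → ℝ) (v : PSpace d n) :
    Qop ρ (fun u => f u / maxwellian β u) v = Qop ρ f v / maxwellian β v := by
  unfold Qop
  split_ifs
  · rfl
  simp only [mul_div_assoc, Finset.sum_div, ite_div, zero_div]
  congr 1
  refine Finset.sum_congr rfl fun i _ => Finset.sum_congr rfl fun j _ => ?_
  split_ifs with hij
  · rw [← integral_div]
    refine integral_congr_ae (hρ.mono fun σ hσ => ?_)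
    simp only [maxwellian_eq_of_norm_eq (norm_collide hσ hij.ne v)]
  · rfl

lemma Tj_div_maxwellian (hβ : 0 < β) (hρ : ∀ᵐ σ ∂ρ, ‖σ‖ = 1) (j : Fin n)
    (f : PSpace d n → ℝ) (v : PSpace d n) :
    Tj ρ β j (fun u => f u / maxwellian β u) v = Rop_j ρ β j f v / maxwellian β v := by
  unfold Tj Rop_j
  rw [← integral_div]
  refine integral_congr_ae (.of_forall fun w => ?_)
  dsimp only
  rw [← integral_div, ← integral_const_mul]
  refine integral_congr_ae (hρ.mono fun σ hσ => ?_)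
  have hg := maxwellian_mul_eq_of_norm_sq_add_eq (β := β)
    (norm_thermCollide_sq_add_norm_thermOut_sq hσ j w v)
  have := (maxwellian_pos hβ (thermCollide σ j w v)).ne'
  have := (maxwellian_pos hβ v).ne'
  field_simp
  linear_combination -f (thermCollide σ j w v) * hg

lemma thermGen'_div_maxwellian (hβ : 0 < β) (hρ : ∀ᵐ σ ∂ρ, ‖σ‖ = 1) (lam mu : ℝ)
    (f : PSpace d n → ℝ) (v : PSpace d n) :
    thermGen' ρ β lam mu (fun u => f u / maxwellian β u) v
      = thermGen ρ β lam mu f v / maxwellian β v := by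
  simp only [thermGen', thermGen, Tav, Rop, Qop_div_maxwellian hρ, Tj_div_maxwellian hβ hρ,
    ← Finset.sum_div]
  ring

end Operators

theorem ground_state_transformed_master_equation_general
    (d N : ℕ) (β lam mu : ℝ)
    (hβ : 0 < β)
    (ρ : Measure (Vec d))
    (hρsph : ∀ᵐ σ ∂ρ, ‖σ‖ = 1)
    (f : ℝ → PSpace d N → ℝ) :
    (∀ (t : ℝ) (v : PSpace d N),
        HasDerivAt (fun s => f s v) (thermGen ρ β lam mu (f t) v) t) ↔
    (∀ (t : ℝ) (v : PSpace d N),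
        HasDerivAt (fun s => f s v / maxwellian β v)
          (thermGen' ρ β lam mu (fun u => f t u / maxwellian β u) v) t) := by
  refine forall_congr' fun t => forall_congr' fun v => ?_
  rw [thermGen'_div_maxwellian hβ hρsph, hasDerivAt_div_const_iff (maxwellian_pos hβ v).ne']

/-- a family solves the Kac master equation iff its ground-state
transform solves the transformed master equation. -/
theorem ground_state_transformed_master_equation
    (d N : ℕ) (hd : 1 ≤ d) (hN : 1 ≤ N) (β lam mu : ℝ)
    (hβ : 0 < β) (hlam : 0 < lam) (hmu : 0 < mu)
    (ρ : Measure (Vec d)) [IsProbabilityMeasure ρ]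
    (hρsph : ∀ᵐ σ ∂ρ, ‖σ‖ = 1)
    (hρsym : ∀ a b : Fin d, (∫ σ, σ a * σ b ∂ρ) = if a = b then (d : ℝ)⁻¹ else 0)
    (f : ℝ → PSpace d N → ℝ) :
    (∀ (t : ℝ) (v : PSpace d N),
        HasDerivAt (fun s => f s v) (thermGen ρ β lam mu (f t) v) t) ↔
    (∀ (t : ℝ) (v : PSpace d N),
        HasDerivAt (fun s => f s v / maxwellian β v)
          (thermGen' ρ β lam mu (fun u => f t u / maxwellian β u) v) t) :=
  ground_state_transformed_master_equation_general d N β lam mu hβ ρ hρsph f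

end
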